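/- arXiv:2308.16387 — 2 statements merged into one kernel-verified Lean document; each statement's English description precedes it below -/
import Mathlib

section
/- Suppose P'(ρ̄) + γρ̄ < 0, with ρ̄ > 0 and η > 0. For the characteristic equation λ² + η|ξ|²λ + ρ̄|ξ|²(P'(ρ̄)/ρ̄ + γ − γ|ξ|²/(1+|ξ|²)) = 0, as |ξ| → 0 the two real roots satisfy λ+(ξ) = √(−(P'(ρ̄)+γρ̄)) |ξ| − (η/2)|ξ|² + O(|ξ|³) and λ−(ξ) = −√(−(P'(ρ̄)+γρ̄)) |ξ| − (η/2)|ξ|² + O(|ξ|³). In particular, for sufficiently small |ξ| ≠ 0, λ+(ξ) > 0. -/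
noncomputable section

/-- The constant coefficient `c(ξ) = ρ̄|ξ|²(P'(ρ̄)/ρ̄ + γ − γ|ξ|²/(1+|ξ|²))` of the
characteristic polynomial, as a function of `x = |ξ|`. -/
def charConst (ρ γ Pρ x : ℝ) : ℝ :=
  ρ * x ^ 2 * (Pρ / ρ + γ - γ * x ^ 2 / (1 + x ^ 2))

/-- The larger root `λ₊` of `λ² + η x² λ + c = 0`. -/
def lamPlus (η ρ γ Pρ x : ℝ) : ℝ :=
  (-(η * x ^ 2) + Real.sqrt (η ^ 2 * x ^ 4 - 4 * charConst ρ γ Pρ x)) / 2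

/-- The smaller root `λ₋` of `λ² + η x² λ + c = 0`. -/
def lamMinus (η ρ γ Pρ x : ℝ) : ℝ :=
  (-(η * x ^ 2) - Real.sqrt (η ^ 2 * x ^ 4 - 4 * charConst ρ γ Pρ x)) / 2

lemma aux1 (u : ℝ) : 1 + u ≤ (1 + |u|) ^ 2 := by
  nlinarith [le_abs_self u, sq_nonneg |u|, abs_nonneg u]

lemma aux2 (u : ℝ) (h : |u| ≤ 1 / 4) : (1 - |u|) ^ 2 ≤ 1 + u := by
  nlinarith [neg_abs_le u, abs_nonneg u]

lemma key (η ρ γ Pρ : ℝ) (hη : 0 < η) (hρ : 0 < ρ)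
    (hinstab : Pρ + γ * ρ < 0) :
    ∃ C r : ℝ, 0 < C ∧ 0 < r ∧
      ∀ x : ℝ, 0 < x → x ≤ r →
        (lamPlus η ρ γ Pρ x) ^ 2 + η * x ^ 2 * lamPlus η ρ γ Pρ x
            + charConst ρ γ Pρ x = 0 ∧
        (lamMinus η ρ γ Pρ x) ^ 2 + η * x ^ 2 * lamMinus η ρ γ Pρ x
            + charConst ρ γ Pρ x = 0 ∧
        |lamPlus η ρ γ Pρ x
            - (Real.sqrt (-(Pρ + γ * ρ)) * x - η / 2 * x ^ 2)| ≤ C * x ^ 3 ∧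
        |lamMinus η ρ γ Pρ x
            - (-(Real.sqrt (-(Pρ + γ * ρ)) * x) - η / 2 * x ^ 2)| ≤ C * x ^ 3 ∧
        0 < lamPlus η ρ γ Pρ x := by
  have hA : 0 < -(Pρ + γ * ρ) := by linarith
  set A : ℝ := -(Pρ + γ * ρ) with hAdef
  set s : ℝ := Real.sqrt A with hsdef
  have hs : 0 < s := Real.sqrt_pos.mpr hA
  have hs2 : s ^ 2 = A := Real.sq_sqrt hA.le
  clear_value s
  set M : ℝ := η ^ 2 + 4 * ρ * |γ| with hMdef
  have hM : 0 < M := by positivity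
  have hM4 : 4 * ρ * |γ| ≤ M := by
    rw [hMdef]; nlinarith [sq_nonneg η]
  clear_value M
  refine ⟨M / (4 * s), min 1 (Real.sqrt (A / M)), div_pos hM (by linarith), ?_, ?_⟩
  · exact lt_min one_pos (Real.sqrt_pos.mpr (div_pos hA hM))
  intro x hx hxr
  have hx1 : x ≤ 1 := le_trans hxr (min_le_left _ _)
  have hxM : M * x ^ 2 ≤ A := by
    have h2 : x ≤ Real.sqrt (A / M) := le_trans hxr (min_le_right _ _)
    have h3 : x ^ 2 ≤ A / M := by
      calc x ^ 2 ≤ Real.sqrt (A / M) ^ 2 := pow_le_pow_left₀ hx.le h2 2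
        _ = A / M := Real.sq_sqrt (div_pos hA hM).le
    rw [mul_comm]
    exact (le_div_iff₀ hM).mp h3
  have h1x : (0:ℝ) < 1 + x ^ 2 := by positivity
  have h1x' : (1:ℝ) ≤ 1 + x ^ 2 := by linarith [sq_nonneg x]
  have hlp : lamPlus η ρ γ Pρ x
      = (-(η * x ^ 2) + Real.sqrt (η ^ 2 * x ^ 4 - 4 * charConst ρ γ Pρ x)) / 2 := rfl
  have hlm : lamMinus η ρ γ Pρ x
      = (-(η * x ^ 2) - Real.sqrt (η ^ 2 * x ^ 4 - 4 * charConst ρ γ Pρ x)) / 2 := rfl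
  have hc : charConst ρ γ Pρ x = -(A * x ^ 2) - ρ * γ * x ^ 4 / (1 + x ^ 2) := by
    rw [hAdef]
    unfold charConst
    field_simp
  set c : ℝ := charConst ρ γ Pρ x with hcdef
  clear_value c
  clear_value A
  set K : ℝ := η ^ 2 + 4 * ρ * γ / (1 + x ^ 2) with hKdef
  have hD : η ^ 2 * x ^ 4 - 4 * c = 4 * A * x ^ 2 + K * x ^ 4 := by
    rw [hc, hKdef]
    field_simp
    ring
  have hKM : |K| ≤ M := by
    have h1 : |4 * ρ * γ / (1 + x ^ 2)| ≤ 4 * ρ * |γ| := by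
      rw [abs_div, abs_of_pos h1x]
      have h2 : |4 * ρ * γ| = 4 * ρ * |γ| := by
        rw [abs_mul, abs_of_pos (by positivity : (0:ℝ) < 4 * ρ)]
      rw [h2]
      exact div_le_self (by positivity) h1x'
    calc |K| ≤ |η ^ 2| + |4 * ρ * γ / (1 + x ^ 2)| := by rw [hKdef]; exact abs_add_le _ _
      _ ≤ η ^ 2 + 4 * ρ * |γ| := by
          rw [abs_of_nonneg (by positivity : (0:ℝ) ≤ η ^ 2)]; linarith
      _ ≤ M := by linarith [hM4, sq_nonneg η]
  clear_value K
  have hKx : |K| * x ^ 2 ≤ A :=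
    le_trans (mul_le_mul_of_nonneg_right hKM (sq_nonneg x)) hxM
  have hKx4 : -(A * x ^ 2) ≤ K * x ^ 4 := by
    have h5 : -|K| * x ^ 4 ≤ K * x ^ 4 :=
      mul_le_mul_of_nonneg_right (neg_abs_le K) (by positivity)
    have h6 : |K| * x ^ 4 ≤ A * x ^ 2 := by
      calc |K| * x ^ 4 = |K| * x ^ 2 * x ^ 2 := by ring
        _ ≤ A * x ^ 2 := mul_le_mul_of_nonneg_right hKx (sq_nonneg x)
    linarith
  have hAx : 0 < A * x ^ 2 := mul_pos hA (pow_pos hx 2)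
  have hDpos : 0 < η ^ 2 * x ^ 4 - 4 * c := by
    rw [hD]
    linarith
  set e : ℝ := Real.sqrt (η ^ 2 * x ^ 4 - 4 * c) with hedef
  have he0 : 0 ≤ e := Real.sqrt_nonneg _
  have he2 : e ^ 2 = η ^ 2 * x ^ 4 - 4 * c := Real.sq_sqrt hDpos.le
  clear_value e
  set u : ℝ := K * x ^ 2 / (4 * A) with hudef
  have hu : |u| ≤ M * x ^ 2 / (4 * A) := by
    rw [hudef, abs_div, abs_of_pos (by linarith : (0:ℝ) < 4 * A), abs_mul,
      abs_of_nonneg (sq_nonneg x)]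
    gcongr
  have hu4 : |u| ≤ 1 / 4 := by
    rw [hudef, abs_div, abs_of_pos (by linarith : (0:ℝ) < 4 * A), abs_mul,
      abs_of_nonneg (sq_nonneg x)]
    rw [div_le_iff₀ (by linarith)]
    linarith
  have hKu : K * x ^ 4 = 4 * A * x ^ 2 * u := by
    rw [hudef]; field_simp
  clear_value u
  have h1u : 0 ≤ 1 + u := by
    have := abs_le.mp hu4
    linarith [this.1]
  set w : ℝ := Real.sqrt (1 + u) with hwdef
  have hw0 : 0 ≤ w := Real.sqrt_nonneg _
  have hw2 : w ^ 2 = 1 + u := Real.sq_sqrt h1u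
  clear_value w
  have hew : e = 2 * s * x * w := by
    rw [hedef, show η ^ 2 * x ^ 4 - 4 * c = (2 * s * x * w) ^ 2 by
      rw [hD, hKu]; linear_combination (-4*x^2*w^2)*hs2 + (-4*A*x^2)*hw2]
    exact Real.sqrt_sq (mul_nonneg (mul_nonneg (by linarith) hx.le) hw0)
  have habs1 : 0 ≤ 1 - |u| := by linarith [hu4]
  have hw_le : w ≤ 1 + |u| := by
    calc w = Real.sqrt (1 + u) := hwdef
      _ ≤ Real.sqrt ((1 + |u|) ^ 2) := Real.sqrt_le_sqrt (aux1 u)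
      _ = 1 + |u| := Real.sqrt_sq (by positivity)
  have hw_ge : 1 - |u| ≤ w := by
    calc 1 - |u| = Real.sqrt ((1 - |u|) ^ 2) := (Real.sqrt_sq habs1).symm
      _ ≤ Real.sqrt (1 + u) := Real.sqrt_le_sqrt (aux2 u hu4)
      _ = w := hwdef.symm
  have hwu : |w - 1| ≤ |u| := abs_le.mpr ⟨by linarith, by linarith⟩
  have hdiffp : lamPlus η ρ γ Pρ x - (s * x - η / 2 * x ^ 2) = s * x * (w - 1) := by
    rw [hlp, hew]; ring
  have hdiffm : lamMinus η ρ γ Pρ x - (-(s * x) - η / 2 * x ^ 2) = -(s * x * (w - 1)) := by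
    rw [hlm, hew]; ring
  have hbound : |s * x * (w - 1)| ≤ M / (4 * s) * x ^ 3 := by
    rw [abs_mul, abs_of_pos (mul_pos hs hx)]
    calc s * x * |w - 1| ≤ s * x * (M * x ^ 2 / (4 * A)) := by
          have := le_trans hwu hu
          gcongr
      _ = M / (4 * s) * x ^ 3 := by
          rw [← hs2]; field_simp
  refine ⟨?_, ?_, ?_, ?_, ?_⟩
  · rw [hlp]; linear_combination he2 / 4
  · rw [hlm]; linear_combination he2 / 4
  · rw [hdiffp]; exact hbound
  · rw [hdiffm, abs_neg]; exact hbound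
  · have hcneg : c < 0 := by
      rw [hc]
      have h1 : ρ * γ * x ^ 4 / (1 + x ^ 2) ≥ -(ρ * |γ| * x ^ 4) := by
        rw [ge_iff_le, neg_le, ← neg_div]
        calc -(ρ * γ * x ^ 4) / (1 + x ^ 2) ≤ |(-(ρ * γ * x ^ 4)) / (1 + x ^ 2)| :=
              le_abs_self _
          _ = ρ * |γ| * x ^ 4 / (1 + x ^ 2) := by
              rw [abs_div, abs_of_pos h1x, abs_neg, abs_mul, abs_mul,
                abs_of_pos hρ, abs_of_nonneg (by positivity : (0:ℝ) ≤ x ^ 4)]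
          _ ≤ ρ * |γ| * x ^ 4 := div_le_self (by positivity) h1x'
      have h2 : 4 * ρ * |γ| * x ^ 4 ≤ M * x ^ 4 :=
        mul_le_mul_of_nonneg_right hM4 (by positivity)
      have h3 : M * x ^ 4 ≤ A * x ^ 2 := by
        calc M * x ^ 4 = M * x ^ 2 * x ^ 2 := by ring
          _ ≤ A * x ^ 2 := mul_le_mul_of_nonneg_right hxM (sq_nonneg x)
      linarith
    have h10 : (η * x ^ 2) ^ 2 < e ^ 2 := by
      rw [he2]
      have h11 : (η * x ^ 2) ^ 2 = η ^ 2 * x ^ 4 := by ring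
      linarith
    have he' : η * x ^ 2 < e := lt_of_pow_lt_pow_left₀ 2 he0 h10
    rw [hlp]
    linarith

/-- In the unstable regime `P'(ρ̄)+γρ̄ < 0`, as `|ξ| → 0` the two real
roots satisfy `λ± (ξ) = ±√(−(P'(ρ̄)+γρ̄))|ξ| − (η/2)|ξ|² + O(|ξ|³)`; in particular
`λ₊(ξ) > 0` for small `|ξ| ≠ 0`. -/
theorem stmt_2 (d : ℕ) (hd : 0 < d) (η ρ γ Pρ : ℝ) (hη : 0 < η) (hρ : 0 < ρ)
    (hinstab : Pρ + γ * ρ < 0) :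
    ∃ C r : ℝ, 0 < C ∧ 0 < r ∧
      ∀ ξ : EuclideanSpace ℝ (Fin d), ξ ≠ 0 → ‖ξ‖ ≤ r →
        (lamPlus η ρ γ Pρ ‖ξ‖) ^ 2 + η * ‖ξ‖ ^ 2 * lamPlus η ρ γ Pρ ‖ξ‖
            + charConst ρ γ Pρ ‖ξ‖ = 0 ∧
        (lamMinus η ρ γ Pρ ‖ξ‖) ^ 2 + η * ‖ξ‖ ^ 2 * lamMinus η ρ γ Pρ ‖ξ‖
            + charConst ρ γ Pρ ‖ξ‖ = 0 ∧
        |lamPlus η ρ γ Pρ ‖ξ‖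
            - (Real.sqrt (-(Pρ + γ * ρ)) * ‖ξ‖ - η / 2 * ‖ξ‖ ^ 2)| ≤ C * ‖ξ‖ ^ 3 ∧
        |lamMinus η ρ γ Pρ ‖ξ‖
            - (-(Real.sqrt (-(Pρ + γ * ρ)) * ‖ξ‖) - η / 2 * ‖ξ‖ ^ 2)| ≤ C * ‖ξ‖ ^ 3 ∧
        0 < lamPlus η ρ γ Pρ ‖ξ‖ := by
  obtain ⟨C, r, hC, hr, h⟩ := key η ρ γ Pρ hη hρ hinstab
  exact ⟨C, r, hC, hr, fun ξ hξ hξr => h ‖ξ‖ (norm_pos_iff.mpr hξ) hξr⟩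
end
end

section
/- (Generalized Gronwall inequality, sublinear case) Let u, a, b be nonnegative continuous functions on [t₀, ∞), c ≥ 0, and 0 ≤ α < 1. If u(t) ≤ c + ∫_{t₀}^t (a(s)u(s) + b(s)u(s)^α) ds for all t ≥ t₀, then u(t) ≤ { c^{1−α} exp[(1−α)∫_{t₀}^t a(s)ds] + (1−α)∫_{t₀}^t b(s) exp[(1−α)∫_s^t a(r)dr] ds }^{1/(1−α)} for all t ≥ t₀. -/
/-!
With `v(s) = c + ∫_{t₀}^s (a u + b u^α)` we have `u ≤ v` and `v' ≤ a v + b v^α`. For `c > 0`,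
`v > 0` and the Bernoulli substitution `w = v^(1-α)` linearises this to
`w' ≤ (1-α)(a w + b)`, which the integrating factor `exp (-(1-α) ∫ a)` integrates to the
claimed bound on `w`. The case `c = 0` follows by letting `c` decrease to `0`, the bound being
continuous in `c`.
-/

open intervalIntegral Set Real

section Primitive

variable {E : Type*} [NormedAddCommGroup E] [NormedSpace ℝ E]
  {f : ℝ → E} {a b : ℝ}

lemma continuousOn_primitive_Icc (hab : a ≤ b) (hf : ContinuousOn f (Icc a b)) :
    ContinuousOn (fun t => ∫ s in a..t, f s) (Icc a b) := by
  simpa [uIcc_of_le hab] using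
    continuousOn_primitive_interval' (hf.intervalIntegrable_of_Icc hab) left_mem_uIcc

lemma hasDerivAt_primitive_of_mem_Ioo [CompleteSpace E] (hf : ContinuousOn f (Icc a b)) {x : ℝ}
    (hx : x ∈ Ioo a b) : HasDerivAt (fun t => ∫ s in a..t, f s) (f x) x :=
  integral_hasDerivAt_right
    ((hf.mono (Icc_subset_Icc_right hx.2.le)).intervalIntegrable_of_Icc hx.1.le)
    ((hf.mono Ioo_subset_Icc_self).stronglyMeasurableAtFilter isOpen_Ioo x hx)
    (hf.continuousAt (Icc_mem_nhds hx.1 hx.2))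

end Primitive

theorem le_of_hasDerivAt_le_mul_add {w w' a b : ℝ → ℝ} {t₀ t : ℝ} (ht : t₀ ≤ t)
    (ha : ContinuousOn a (Icc t₀ t)) (hb : ContinuousOn b (Icc t₀ t))
    (hw : ContinuousOn w (Icc t₀ t)) (hw' : ∀ x ∈ Ioo t₀ t, HasDerivAt w (w' x) x)
    (hbound : ∀ x ∈ Ioo t₀ t, w' x ≤ a x * w x + b x) :
    w t ≤ w t₀ * exp (∫ s in t₀..t, a s) + ∫ s in t₀..t, b s * exp (∫ r in s..t, a r) := by
  set A : ℝ → ℝ := fun s => ∫ r in t₀..s, a r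
  have hA : ContinuousOn A (Icc t₀ t) := continuousOn_primitive_Icc ht ha
  have hbA : ContinuousOn (fun s => b s * exp (-A s)) (Icc t₀ t) :=
    hb.mul hA.neg.rexp
  set ψ : ℝ → ℝ := fun s => w s * exp (-A s) - ∫ r in t₀..s, b r * exp (-A r)
  have hψ : AntitoneOn ψ (Icc t₀ t) := by
    refine antitoneOn_of_hasDerivWithinAt_nonpos (convex_Icc t₀ t)
      ((hw.mul hA.neg.rexp).sub (continuousOn_primitive_Icc ht hbA)) (fun x hx => ?_)
      (f' := fun x => exp (-A x) * (w' x - (a x * w x + b x))) (fun x hx => ?_)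
    · rw [interior_Icc] at hx
      refine (((hw' x hx).mul (hasDerivAt_primitive_of_mem_Ioo ha hx).neg.exp).sub
        (hasDerivAt_primitive_of_mem_Ioo hbA hx)).hasDerivWithinAt.congr_deriv ?_
      simp only [A, Pi.neg_apply]
      ring
    · rw [interior_Icc] at hx
      exact mul_nonpos_of_nonneg_of_nonpos (exp_pos _).le (sub_nonpos.2 (hbound x hx))
  have hψt : ψ t ≤ w t₀ := by
    simpa [ψ, A] using hψ (left_mem_Icc.2 ht) (right_mem_Icc.2 ht) ht
  have hshift : ∀ s ∈ uIcc t₀ t,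
      b s * exp (∫ r in s..t, a r) = exp (A t) * (b s * exp (-A s)) := by
    intro s hs
    rw [uIcc_of_le ht] at hs
    rw [← integral_interval_sub_left (ha.intervalIntegrable_of_Icc ht)
      ((ha.mono (Icc_subset_Icc_right hs.2)).intervalIntegrable_of_Icc hs.1), sub_eq_add_neg,
      exp_add]
    ring
  rw [integral_congr hshift, integral_const_mul]
  have hcancel : exp (A t) * exp (-A t) = 1 := by rw [← exp_add, add_neg_cancel, exp_zero]
  linear_combination exp (A t) * hψt - w t * hcancel

lemma mul_add_mul_rpow_mul_rpow_neg_le {a b u v α : ℝ} (ha : 0 ≤ a) (hb : 0 ≤ b) (hα : 0 ≤ α)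
    (hu : 0 ≤ u) (huv : u ≤ v) (hv : 0 < v) :
    (a * u + b * u ^ α) * v ^ (-α) ≤ a * v ^ (1 - α) + b := by
  have h1 : v ^ (1 - α) = v * v ^ (-α) := by rw [sub_eq_add_neg, rpow_add hv, rpow_one]
  have h2 : v ^ α * v ^ (-α) = 1 := by rw [← rpow_add hv, add_neg_cancel, rpow_zero]
  calc (a * u + b * u ^ α) * v ^ (-α) ≤ (a * v + b * v ^ α) * v ^ (-α) := by gcongr
    _ = a * v ^ (1 - α) + b := by rw [h1]; linear_combination b * h2

noncomputable def sublinearGronwallBound (a b : ℝ → ℝ) (α t₀ t c : ℝ) : ℝ :=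
  (c ^ (1 - α) * exp ((1 - α) * ∫ s in t₀..t, a s)
    + (1 - α) * ∫ s in t₀..t, b s * exp ((1 - α) * ∫ r in s..t, a r)) ^ (1 / (1 - α))

lemma continuous_sublinearGronwallBound {a b : ℝ → ℝ} {α t₀ t : ℝ} (hα : α < 1) :
    Continuous (sublinearGronwallBound a b α t₀ t) :=
  ((continuous_rpow_const (by linarith)).mul_const _ |>.add_const _).rpow_const
    fun _ => Or.inr (one_div_pos.2 (by linarith)).le

theorem sublinear_gronwall_of_pos {t₀ t c α : ℝ} {u a b : ℝ → ℝ} (ht : t₀ ≤ t)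
    (hu : ContinuousOn u (Icc t₀ t)) (ha : ContinuousOn a (Icc t₀ t))
    (hb : ContinuousOn b (Icc t₀ t))
    (hu0 : ∀ s ∈ Icc t₀ t, 0 ≤ u s) (ha0 : ∀ s ∈ Icc t₀ t, 0 ≤ a s)
    (hb0 : ∀ s ∈ Icc t₀ t, 0 ≤ b s) (hc : 0 < c) (hα0 : 0 ≤ α) (hα1 : α < 1)
    (hint : ∀ s ∈ Icc t₀ t, u s ≤ c + ∫ r in t₀..s, (a r * u r + b r * u r ^ α)) :
    u t ≤ sublinearGronwallBound a b α t₀ t c := by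
  have hβ : 0 < 1 - α := by linarith
  set g : ℝ → ℝ := fun s => a s * u s + b s * u s ^ α
  have hg : ContinuousOn g (Icc t₀ t) :=
    (ha.mul hu).add (hb.mul (hu.rpow_const fun _ _ => Or.inr hα0))
  set v : ℝ → ℝ := fun s => c + ∫ r in t₀..s, g r
  have hv_pos : ∀ s ∈ Icc t₀ t, 0 < v s := fun s hs =>
    add_pos_of_pos_of_nonneg hc <| integral_nonneg hs.1 fun r hr =>
      have hr' : r ∈ Icc t₀ t := ⟨hr.1, hr.2.trans hs.2⟩
      add_nonneg (mul_nonneg (ha0 r hr') (hu0 r hr'))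
        (mul_nonneg (hb0 r hr') (rpow_nonneg (hu0 r hr') α))
  have hv : ContinuousOn v (Icc t₀ t) := (continuousOn_primitive_Icc ht hg).const_add c
  have hw := le_of_hasDerivAt_le_mul_add ht (ha.const_smul (1 - α)) (hb.const_smul (1 - α))
    (hv.rpow_const (fun _ _ => Or.inr hβ.le))
    (fun x hx => ((hasDerivAt_primitive_of_mem_Ioo hg hx).const_add c).rpow_const
      (Or.inl (hv_pos x (Ioo_subset_Icc_self hx)).ne'))
    (fun x hx => by
      have hx' := Ioo_subset_Icc_self hx
      have := mul_add_mul_rpow_mul_rpow_neg_le (ha0 x hx') (hb0 x hx') hα0 (hu0 x hx')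
        (hint x hx') (hv_pos x hx')
      rw [show 1 - α - 1 = -α by ring]
      simp only [Pi.smul_apply, smul_eq_mul]
      linear_combination (1 - α) * this)
  simp only [v, integral_same, add_zero, Pi.smul_apply, smul_eq_mul, integral_const_mul,
    mul_assoc] at hw
  have hvt := hv_pos t (right_mem_Icc.2 ht)
  calc u t ≤ v t := hint t (right_mem_Icc.2 ht)
    _ = (v t ^ (1 - α)) ^ (1 / (1 - α)) := by
      rw [← rpow_mul hvt.le, mul_one_div_cancel hβ.ne', rpow_one]
    _ ≤ _ := rpow_le_rpow (rpow_nonneg hvt.le _) hw (one_div_pos.2 hβ).le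

/-- generalized Gronwall inequality, sublinear case `0 ≤ α < 1`. -/
theorem stmt_9 (t₀ c α : ℝ) (u a b : ℝ → ℝ)
    (hu : ContinuousOn u (Set.Ici t₀)) (ha : ContinuousOn a (Set.Ici t₀))
    (hb : ContinuousOn b (Set.Ici t₀))
    (hu0 : ∀ t ∈ Set.Ici t₀, 0 ≤ u t) (ha0 : ∀ t ∈ Set.Ici t₀, 0 ≤ a t)
    (hb0 : ∀ t ∈ Set.Ici t₀, 0 ≤ b t)
    (hc : 0 ≤ c) (hα0 : 0 ≤ α) (hα1 : α < 1)
    (hint : ∀ t ∈ Set.Ici t₀,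
      u t ≤ c + ∫ s in t₀..t, (a s * u s + b s * u s ^ α)) :
    ∀ t ∈ Set.Ici t₀,
      u t ≤ (c ^ (1 - α) * Real.exp ((1 - α) * ∫ s in t₀..t, a s)
          + (1 - α) * ∫ s in t₀..t,
              b s * Real.exp ((1 - α) * ∫ r in s..t, a r)) ^ (1 / (1 - α)) := by
  intro t ht
  have hIcc : Icc t₀ t ⊆ Ici t₀ := Icc_subset_Ici_self
  refine ge_of_tendsto
    (((continuous_sublinearGronwallBound hα1).tendsto c).mono_left nhdsWithin_le_nhds)
    (eventually_nhdsWithin_of_forall (s := Ioi c) fun c' hc' => ?_)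
  exact sublinear_gronwall_of_pos ht (hu.mono hIcc) (ha.mono hIcc) (hb.mono hIcc)
    (fun s hs => hu0 s (hIcc hs)) (fun s hs => ha0 s (hIcc hs)) (fun s hs => hb0 s (hIcc hs))
    (hc.trans_lt hc') hα0 hα1 fun s hs => (hint s (hIcc hs)).trans (by linarith [mem_Ioi.1 hc'])
end
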